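/- Let V and V' be left vector spaces over division rings R and R' with dim V = n ≥ 2 finite, and let g : V → V' be a non-trivial GL-mapping. Let u be a linear automorphism of V and u' a linear automorphism of V' with g ∘ u = u' ∘ g. If u' fixes every vector of g(V) (equivalently g ∘ u = g), then there exists a scalar a ∈ R, a ≠ 0, such that u(x) = a•x for all x ∈ V; i.e., u is the identity or a homothety. -/

import Mathlib

/-!
Since `g ∘ u = g`, if some `v` and `u v` were linearly independent then `g` would identify the
two vectors of one independent pair; as `GL(V)` acts transitively on independent pairs and `g` is
a GL-mapping, `g` would identify the vectors of every independent pair, and (in dimension `≥ 2`,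
via a third vector) any two nonzero vectors, contradicting non-triviality. So `u` maps every
vector into its own line, and a linear map with this property in dimension `≠ 1` is a homothety.
-/

open Module Submodule

section

variable {K V : Type*} [DivisionRing K] [AddCommGroup V] [Module K V]

theorem exists_linearEquiv_apply_eq_of_linearIndependent {ι : Type*} [Finite ι] {v w : ι → V}
    (hv : LinearIndependent K v) (hw : LinearIndependent K w) :
    ∃ e : V ≃ₗ[K] V, ∀ i, e (v i) = w i := by
  have : FiniteDimensional K (span K (Set.range v)) := .span_of_finite K (Set.finite_range v)
  obtain ⟨e, he⟩ :=
    exists_linearEquiv_restrict_eq ((Basis.span hv).equiv (Basis.span hw) (.refl ι))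
  refine ⟨e, fun i => ?_⟩
  have hei := he (Basis.span hv i)
  rw [Basis.equiv_apply, Equiv.refl_apply, Basis.span_apply, Basis.span_apply] at hei
  exact hei.symm

theorem exists_notMem_span_singleton_of_finrank_ne_one (hV : finrank K V ≠ 1) {y : V}
    (hy : y ≠ 0) : ∃ t : V, t ∉ span K {y} := by
  by_contra! h
  refine hV ?_
  rw [← finrank_top, ← eq_top_iff'.mpr h, finrank_span_singleton hy]

theorem apply_eq_apply_of_forall_linearIndependent {α : Type*} {g : V → α}
    (hV : finrank K V ≠ 1) (hg : ∀ y z, LinearIndependent K ![y, z] → g y = g z)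
    {y z : V} (hy : y ≠ 0) (hz : z ≠ 0) : g y = g z := by
  by_cases hyz : LinearIndependent K ![y, z]
  · exact hg y z hyz
  have hzy : span K {z} ≤ span K {y} := by
    rw [LinearIndependent.pair_iff' hy] at hyz
    push Not at hyz
    obtain ⟨c, rfl⟩ := hyz
    exact span_singleton_smul_le K c y
  obtain ⟨t, ht⟩ := exists_notMem_span_singleton_of_finrank_ne_one hV hy
  have hind {x : V} (hx : x ≠ 0) (htx : t ∉ span K {x}) : LinearIndependent K ![x, t] :=
    (LinearIndependent.pair_iff' hx).mpr fun c hc =>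
      htx (hc ▸ smul_mem _ c (mem_span_singleton_self x))
  rw [hg y t (hind hy ht), hg z t (hind hz fun h => ht (hzy h))]

end

section

variable (R R' : Type*) {V V' : Type*} [DivisionRing R] [DivisionRing R']
    [AddCommGroup V] [Module R V] [AddCommGroup V'] [Module R' V']

def IsGLMapping (g : V → V') : Prop :=
  ∀ u : V ≃ₗ[R] V, ∃ u' : V' ≃ₗ[R'] V', g ∘ ⇑u = ⇑u' ∘ g

variable {R R'}

theorem IsGLMapping.apply_eq_of_linearIndependent {g : V → V'} (hg : IsGLMapping R R' g)
    {x x' y z : V} (hx : LinearIndependent R ![x, x']) (hgx : g x = g x')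
    (hyz : LinearIndependent R ![y, z]) : g y = g z := by
  obtain ⟨e, he⟩ := exists_linearEquiv_apply_eq_of_linearIndependent hx hyz
  obtain ⟨e', he'⟩ := hg e
  have hey : e x = y := he 0
  have hez : e x' = z := he 1
  calc g y = e' (g x) := hey ▸ congrFun he' x
    _ = e' (g x') := by rw [hgx]
    _ = g z := hez ▸ (congrFun he' x').symm

end

theorem stmt_8_general {R R' V V' : Type*} [DivisionRing R] [DivisionRing R']
    [AddCommGroup V] [Module R V] [AddCommGroup V'] [Module R' V']
    (n : ℕ) (hn : 2 ≤ n) (hdim : Module.finrank R V = n)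
    (g : V → V')
    (hGL : ∀ u : V ≃ₗ[R] V, ∃ u' : V' ≃ₗ[R'] V', g ∘ ⇑u = ⇑u' ∘ g)
    (hnt : ∃ x y : V, x ≠ 0 ∧ y ≠ 0 ∧ g x ≠ g y)
    (u : V ≃ₗ[R] V) (u' : V' ≃ₗ[R'] V')
    (hcomm : g ∘ ⇑u = ⇑u' ∘ g)
    (hfix : ∀ x : V, u' (g x) = g x) :
    ∃ a : R, a ≠ 0 ∧ ∀ x : V, u x = a • x := by
  have hgu (x : V) : g x = g (u x) := ((congrFun hcomm x).trans (hfix x)).symm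
  have hV : finrank R V ≠ 1 := by omega
  obtain ⟨x, y, hx, hy, hxy⟩ := hnt
  have hline (v : V) : ¬ LinearIndependent R ![v, u.toLinearMap v] := fun hv =>
    hxy <| apply_eq_apply_of_forall_linearIndependent hV
      (fun _ _ => IsGLMapping.apply_eq_of_linearIndependent hGL hv (hgu v)) hx hy
  obtain ⟨⟨a, _⟩, hua⟩ :=
    LinearMap.exists_mem_center_apply_eq_smul_of_forall_notLinearIndependent hV hline
  have hu (x : V) : u x = a • x := by
    simpa [Subring.smul_def] using LinearMap.congr_fun hua x
  exact ⟨a, fun ha => hx (u.map_eq_zero_iff.mp (by rw [hu, ha, zero_smul])), hu⟩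

/-- **Lemma 4 (Pankov).** If `g` is a non-trivial GL-mapping, `g ∘ u = u' ∘ g` and `u'`
fixes every vector of `g(V)` (i.e. `g ∘ u = g`), then `u` is the identity or a
homothety: `u x = a • x` for some nonzero scalar `a` and all `x`. -/
theorem stmt_8 {R R' V V' : Type*} [DivisionRing R] [DivisionRing R']
    [AddCommGroup V] [Module R V] [AddCommGroup V'] [Module R' V']
    (n : ℕ) (hn : 2 ≤ n) [FiniteDimensional R V] (hdim : Module.finrank R V = n)
    (g : V → V')
    (hGL : ∀ u : V ≃ₗ[R] V, ∃ u' : V' ≃ₗ[R'] V', g ∘ ⇑u = ⇑u' ∘ g)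
    (hnt : ∃ x y : V, x ≠ 0 ∧ y ≠ 0 ∧ g x ≠ g y)
    (u : V ≃ₗ[R] V) (u' : V' ≃ₗ[R'] V')
    (hcomm : g ∘ ⇑u = ⇑u' ∘ g)
    (hfix : ∀ x : V, u' (g x) = g x) :
    ∃ a : R, a ≠ 0 ∧ ∀ x : V, u x = a • x :=
  stmt_8_general n hn hdim g hGL hnt u u' hcomm hfix
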